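/- Let ρ be a two-qubit state with geometric entanglement G(ρ) = sin²α, α ∈ [0, π/4], and let ρ' be any state with F(ρ,ρ') ≥ f = cos²k, k ∈ [0, π/2]. Then G(ρ') ≥ sin²(max{α − k, 0}). -/

import Mathlib

open Matrix
open scoped ComplexOrder Kronecker

noncomputable section

/-- A density operator: positive semidefinite with unit trace. -/
def IsDensity {d : Type*} [Fintype d] [DecidableEq d] (ρ : Matrix d d ℂ) : Prop :=
  ρ.PosSemidef ∧ ρ.trace = 1

open Classical in
/-- Square root of a positive semidefinite matrix (junk value `0` otherwise). -/
noncomputable def matSqrt {d : Type*} [Fintype d] [DecidableEq d] (A : Matrix d d ℂ) :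
    Matrix d d ℂ :=
  if h : A.PosSemidef then
    h.1.eigenvectorUnitary.1 * diagonal ((↑) ∘ (Real.sqrt ·) ∘ h.1.eigenvalues) *
      (star h.1.eigenvectorUnitary : Matrix d d ℂ)
  else 0

/-- Uhlmann fidelity `F(ρ,σ) = (Tr √(√ρ σ √ρ))²`. -/
noncomputable def fid {d : Type*} [Fintype d] [DecidableEq d] (ρ σ : Matrix d d ℂ) : ℝ :=
  ((matSqrt (matSqrt ρ * σ * matSqrt ρ)).trace.re) ^ 2

/-- Bures angle `D(ρ,σ) = arccos √F(ρ,σ)`. -/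
noncomputable def bures {d : Type*} [Fintype d] [DecidableEq d] (ρ σ : Matrix d d ℂ) : ℝ :=
  Real.arccos (Real.sqrt (fid ρ σ))

abbrev Q1 := Matrix (Fin 2) (Fin 2) ℂ
abbrev Q2 := Matrix (Fin 2 × Fin 2) (Fin 2 × Fin 2) ℂ

/-- Separable two-qubit states: convex combinations of product states. -/
def SepState (σ : Q2) : Prop :=
  ∃ (m : ℕ) (p : Fin m → ℝ) (a b : Fin m → Q1),
    (∀ i, 0 ≤ p i) ∧ (∑ i, p i) = 1 ∧ (∀ i, IsDensity (a i)) ∧ (∀ i, IsDensity (b i)) ∧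
    σ = ∑ i, p i • (a i ⊗ₖ b i)

/-- Geometric entanglement of a two-qubit state. -/
noncomputable def G2 (ρ : Q2) : ℝ := 1 - sSup {x : ℝ | ∃ σ, SepState σ ∧ x = fid ρ σ}

/-! The Bures angle `A(ρ,σ) = arccos √F(ρ,σ)` obeys the triangle inequality. Writing
`√F(ρ,σ) = ‖√σ √ρ‖₁ = max_U |tr (√σ √ρ U)|` (via a singular value decomposition), the matrices
`√ρ U`, `√σ`, `√τ V` are unit vectors of the Hilbert–Schmidt space whose mutual angles are
`A(ρ,σ)`, `A(σ,τ)` and at least `A(ρ,τ)` for suitable unitaries `U`, `V`, so the triangle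
inequality for angles between vectors applies. Every separable `σ` has `A(ρ,σ) ≥ α`, and
`A(ρ,ρ') ≤ k`, hence `A(ρ',σ) ≥ max (α - k) 0`, i.e. `F(ρ',σ) ≤ cos² (max (α - k) 0)`. -/

section MatSqrt

variable {n : Type*} [Fintype n] [DecidableEq n] {A : Matrix n n ℂ}

lemma matSqrt_of_posSemidef (hA : A.PosSemidef) :
    matSqrt A = hA.1.eigenvectorUnitary.1 * diagonal ((↑) ∘ (Real.sqrt ·) ∘ hA.1.eigenvalues) *
      (star hA.1.eigenvectorUnitary : Matrix n n ℂ) := by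
  rw [matSqrt, dif_pos hA]

lemma posSemidef_matSqrt (hA : A.PosSemidef) : (matSqrt A).PosSemidef := by
  rw [matSqrt_of_posSemidef hA, star_eq_conjTranspose]
  exact (posSemidef_diagonal_iff.mpr fun i => by simp [Real.sqrt_nonneg]).mul_mul_conjTranspose_same
    _

lemma conjTranspose_matSqrt (hA : A.PosSemidef) : (matSqrt A)ᴴ = matSqrt A :=
  (posSemidef_matSqrt hA).1

lemma matSqrt_mul_self (hA : A.PosSemidef) : matSqrt A * matSqrt A = A := by
  set U : Matrix n n ℂ := hA.1.eigenvectorUnitary.1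
  set D : Matrix n n ℂ := diagonal ((↑) ∘ (Real.sqrt ·) ∘ hA.1.eigenvalues)
  have hD : D * D = diagonal (RCLike.ofReal ∘ hA.1.eigenvalues) := by
    simp only [D, diagonal_mul_diagonal, Function.comp_apply, ← Complex.ofReal_mul,
      Real.mul_self_sqrt (hA.eigenvalues_nonneg _)]
    rfl
  conv_rhs => rw [hA.1.spectral_theorem, Unitary.conjStarAlgAut_apply]
  calc matSqrt A * matSqrt A = U * (D * (star U * U) * D) * star U := by
        simp only [matSqrt_of_posSemidef hA, U, D, Matrix.mul_assoc]
    _ = _ := by rw [Unitary.coe_star_mul_self, Matrix.mul_one, hD]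

end MatSqrt

section SingularValues

lemma orthonormal_normalize_of_inner_eq_ite {ι E : Type*} [DecidableEq ι] [NormedAddCommGroup E]
    [InnerProductSpace ℂ E] {c : ι → E} {d : ι → ℝ}
    (hc : ∀ i j, inner ℂ (c i) (c j) = if i = j then (d i : ℂ) else 0) :
    Orthonormal ℂ (({i | 0 < d i} : Set ι).domRestrict
      fun i => ((Real.sqrt (d i) : ℂ))⁻¹ • c i) := by
  rw [orthonormal_iff_ite]
  rintro ⟨i, hi⟩ ⟨j, -⟩
  simp only [Set.domRestrict_apply, inner_smul_left, inner_smul_right, hc, Subtype.mk.injEq]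
  split_ifs with hij
  · subst hij
    have hs : (Real.sqrt (d i) : ℂ) ≠ 0 := by exact_mod_cast (Real.sqrt_pos.mpr hi).ne'
    have hsq : (d i : ℂ) = (Real.sqrt (d i) : ℂ) ^ 2 := by
      rw [← Complex.ofReal_pow, Real.sq_sqrt hi.le]
    rw [map_inv₀, Complex.conj_ofReal, hsq]
    field_simp
  · simp

variable {n : Type*} [Fintype n] [DecidableEq n]

lemma exists_unitary_eq_mul_diagonal_sqrt {N : Matrix n n ℂ} {d : n → ℝ}
    (hN : Nᴴ * N = diagonal ((↑) ∘ d)) :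
    ∃ W ∈ unitaryGroup n ℂ, N = W * diagonal ((↑) ∘ (Real.sqrt ·) ∘ d) := by
  let col : n → EuclideanSpace ℂ n := fun i => WithLp.toLp 2 fun x => N x i
  have hcol (i j : n) : inner ℂ (col i) (col j) = if i = j then (d i : ℂ) else 0 := by
    have := congrFun (congrFun hN i) j
    simp only [mul_apply, conjTranspose_apply, diagonal_apply, Function.comp_apply] at this
    simp [col, PiLp.inner_apply, ← this, mul_comm]
  obtain ⟨b, hb⟩ :=
    (orthonormal_normalize_of_inner_eq_ite hcol).exists_orthonormalBasis_extension_of_card_eq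
      (by simp)
  refine ⟨(EuclideanSpace.basisFun n ℂ).toBasis.toMatrix b.toBasis,
    (EuclideanSpace.basisFun n ℂ).toMatrix_orthonormalBasis_mem_unitary b, ?_⟩
  ext x i
  rw [mul_diagonal]
  change N x i = b i x * _
  by_cases hi : 0 < d i
  · have hs : (Real.sqrt (d i) : ℂ) ≠ 0 := by exact_mod_cast (Real.sqrt_pos.mpr hi).ne'
    rw [hb i hi]
    simp only [col, PiLp.smul_apply, smul_eq_mul, Function.comp_apply]
    field_simp
  · have hi : d i ≤ 0 := not_lt.mp hi
    have : col i = 0 := re_inner_self_nonpos.mp (by rw [hcol, if_pos rfl]; exact hi)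
    simpa [Real.sqrt_eq_zero'.mpr hi] using congrFun (congrArg WithLp.ofLp this) x

end SingularValues

section TraceNorm

variable {n : Type*} [Fintype n] [DecidableEq n]

def traceNorm (M : Matrix n n ℂ) : ℝ := (matSqrt (Mᴴ * M)).trace.re

lemma trace_matSqrt {A : Matrix n n ℂ} (hA : A.PosSemidef) :
    (matSqrt A).trace = ∑ i, (Real.sqrt (hA.1.eigenvalues i) : ℂ) := by
  rw [matSqrt_of_posSemidef hA, trace_mul_cycle, Unitary.coe_star_mul_self, Matrix.one_mul,
    trace_diagonal]
  rfl

lemma exists_svd (M : Matrix n n ℂ) : ∃ s : n → ℝ, 0 ≤ s ∧ traceNorm M = ∑ i, s i ∧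
    ∃ W ∈ unitaryGroup n ℂ, ∃ U ∈ unitaryGroup n ℂ,
      M = W * diagonal (fun i => (s i : ℂ)) * star U := by
  have hH := posSemidef_conjTranspose_mul_self M
  set U : Matrix n n ℂ := hH.1.eigenvectorUnitary.1
  have hU : U ∈ unitaryGroup n ℂ := hH.1.eigenvectorUnitary.2
  have hMU : (M * U)ᴴ * (M * U) = diagonal ((↑) ∘ hH.1.eigenvalues) := by
    have := hH.1.conjStarAlgAut_star_eigenvectorUnitary
    rw [Unitary.conjStarAlgAut_apply] at this
    rw [conjTranspose_mul, ← star_eq_conjTranspose]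
    simp only [Unitary.coe_star, star_star, Matrix.mul_assoc] at this ⊢
    exact this
  obtain ⟨W, hW, hMW⟩ := exists_unitary_eq_mul_diagonal_sqrt hMU
  refine ⟨Real.sqrt ∘ hH.1.eigenvalues, fun i => Real.sqrt_nonneg _, ?_, W, hW, U, hU, ?_⟩
  · rw [traceNorm, trace_matSqrt hH]
    simp only [Complex.re_sum, Complex.ofReal_re, Function.comp_apply]
  · calc M = M * U * star U := by
          rw [Matrix.mul_assoc, mem_unitaryGroup_iff.mp hU, Matrix.mul_one]
      _ = _ := by rw [hMW]; rfl

lemma norm_trace_diagonal_mul_unitary_le {s : n → ℝ} (hs : 0 ≤ s) {X : Matrix n n ℂ}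
    (hX : X ∈ unitaryGroup n ℂ) : ‖(diagonal (fun i => (s i : ℂ)) * X).trace‖ ≤ ∑ i, s i := by
  simp only [trace, diag_apply, diagonal_mul]
  refine (norm_sum_le _ _).trans (Finset.sum_le_sum fun i _ => ?_)
  rw [norm_mul, Complex.norm_real, Real.norm_of_nonneg (hs i)]
  exact mul_le_of_le_one_right (hs i) (entry_norm_bound_of_unitary hX i i)

lemma norm_trace_mul_unitary_le_traceNorm (M : Matrix n n ℂ) {V : Matrix n n ℂ}
    (hV : V ∈ unitaryGroup n ℂ) : ‖(M * V).trace‖ ≤ traceNorm M := by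
  obtain ⟨s, hs, hsum, W, hW, U, hU, hM⟩ := exists_svd M
  rw [hsum, hM, Matrix.mul_assoc, Matrix.mul_assoc, trace_mul_comm, Matrix.mul_assoc]
  exact norm_trace_diagonal_mul_unitary_le hs
    (Submonoid.mul_mem _ (Submonoid.mul_mem _ (Unitary.star_mem hU) hV) hW)

lemma exists_unitary_trace_mul_eq_traceNorm (M : Matrix n n ℂ) :
    ∃ V ∈ unitaryGroup n ℂ, (M * V).trace = traceNorm M := by
  obtain ⟨s, -, hsum, W, hW, U, hU, hM⟩ := exists_svd M
  refine ⟨U * star W, Submonoid.mul_mem _ hU (Unitary.star_mem hW), ?_⟩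
  calc (M * (U * star W)).trace
      = (W * diagonal (fun i => (s i : ℂ)) * (star U * U) * star W).trace := by
        rw [hM]; simp only [Matrix.mul_assoc]
    _ = (star W * W * diagonal (fun i => (s i : ℂ))).trace := by
        rw [mem_unitaryGroup_iff'.mp hU, Matrix.mul_one, trace_mul_cycle]
    _ = traceNorm M := by
        rw [mem_unitaryGroup_iff'.mp hW, Matrix.one_mul, trace_diagonal, hsum,
          Complex.ofReal_sum]

end TraceNorm

section HilbertSchmidt

variable {n : Type*} [Fintype n]

def hsVec (A : Matrix n n ℂ) : EuclideanSpace ℂ (n × n) := WithLp.toLp 2 fun p => A p.1 p.2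

lemma inner_hsVec (A B : Matrix n n ℂ) : inner ℂ (hsVec A) (hsVec B) = (Aᴴ * B).trace := by
  simp only [hsVec, PiLp.inner_apply, RCLike.inner_apply, trace, diag_apply, mul_apply,
    conjTranspose_apply, Fintype.sum_prod_type]
  rw [Finset.sum_comm]
  simp [mul_comm]

end HilbertSchmidt

section Fidelity

variable {n : Type*} [Fintype n] [DecidableEq n] {ρ σ : Matrix n n ℂ}

lemma fid_nonneg (ρ σ : Matrix n n ℂ) : 0 ≤ fid ρ σ := sq_nonneg _

lemma traceNorm_conjTranspose_le (M : Matrix n n ℂ) : traceNorm Mᴴ ≤ traceNorm M := by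
  obtain ⟨V, hV, hMV⟩ := exists_unitary_trace_mul_eq_traceNorm Mᴴ
  have hstar : (Mᴴ * V).trace = star (M * star V).trace := by
    rw [← trace_conjTranspose, conjTranspose_mul, star_eq_conjTranspose,
      conjTranspose_conjTranspose, trace_mul_comm]
  have hnonneg : 0 ≤ traceNorm Mᴴ :=
    (norm_nonneg _).trans (norm_trace_mul_unitary_le_traceNorm Mᴴ (one_mem _))
  calc traceNorm Mᴴ = ‖(Mᴴ * V).trace‖ := by
        rw [hMV, Complex.norm_real, Real.norm_of_nonneg hnonneg]
    _ = ‖(M * star V).trace‖ := by rw [hstar, norm_star]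
    _ ≤ traceNorm M := norm_trace_mul_unitary_le_traceNorm M (Unitary.star_mem hV)

lemma traceNorm_conjTranspose (M : Matrix n n ℂ) : traceNorm Mᴴ = traceNorm M :=
  (traceNorm_conjTranspose_le M).antisymm (by simpa using traceNorm_conjTranspose_le Mᴴ)

lemma fid_eq_traceNorm_sq (hρ : ρ.PosSemidef) (hσ : σ.PosSemidef) :
    fid ρ σ = traceNorm (matSqrt σ * matSqrt ρ) ^ 2 := by
  rw [fid, traceNorm, conjTranspose_mul, conjTranspose_matSqrt hρ, conjTranspose_matSqrt hσ]
  simp only [Matrix.mul_assoc]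
  rw [← Matrix.mul_assoc (matSqrt σ) (matSqrt σ), matSqrt_mul_self hσ]

lemma sqrt_fid_eq_traceNorm (hρ : ρ.PosSemidef) (hσ : σ.PosSemidef) :
    Real.sqrt (fid ρ σ) = traceNorm (matSqrt σ * matSqrt ρ) := by
  rw [fid_eq_traceNorm_sq hρ hσ, Real.sqrt_sq]
  exact (norm_nonneg _).trans (norm_trace_mul_unitary_le_traceNorm _ (one_mem _))

lemma fid_comm (hρ : ρ.PosSemidef) (hσ : σ.PosSemidef) : fid ρ σ = fid σ ρ := by
  rw [fid_eq_traceNorm_sq hρ hσ, fid_eq_traceNorm_sq hσ hρ, ← traceNorm_conjTranspose,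
    conjTranspose_mul, conjTranspose_matSqrt hρ, conjTranspose_matSqrt hσ]

lemma norm_hsVec_matSqrt_mul (hρ : IsDensity ρ) {U : Matrix n n ℂ} (hU : U ∈ unitaryGroup n ℂ) :
    ‖hsVec (matSqrt ρ * U)‖ = 1 := by
  have hsq : ‖hsVec (matSqrt ρ * U)‖ ^ 2 = 1 := by
    rw [@norm_sq_eq_re_inner ℂ, inner_hsVec, conjTranspose_mul, conjTranspose_matSqrt hρ.1,
      Matrix.mul_assoc, ← Matrix.mul_assoc (matSqrt ρ), matSqrt_mul_self hρ.1, trace_mul_comm,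
      Matrix.mul_assoc, ← star_eq_conjTranspose, mem_unitaryGroup_iff.mp hU, Matrix.mul_one, hρ.2]
    rfl
  exact (pow_eq_one_iff_of_nonneg (norm_nonneg _) two_ne_zero).mp hsq

lemma exists_unitary_inner_hsVec_eq_sqrt_fid (hρ : ρ.PosSemidef) (hσ : σ.PosSemidef) :
    ∃ U ∈ unitaryGroup n ℂ,
      inner ℂ (hsVec (matSqrt σ)) (hsVec (matSqrt ρ * U)) = Real.sqrt (fid ρ σ) := by
  obtain ⟨U, hU, hUtr⟩ := exists_unitary_trace_mul_eq_traceNorm (matSqrt σ * matSqrt ρ)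
  refine ⟨U, hU, ?_⟩
  rw [inner_hsVec, conjTranspose_matSqrt hσ, ← Matrix.mul_assoc, hUtr,
    sqrt_fid_eq_traceNorm hρ hσ]

lemma re_inner_hsVec_le_sqrt_fid (hρ : ρ.PosSemidef) (hσ : σ.PosSemidef) {U V : Matrix n n ℂ}
    (hU : U ∈ unitaryGroup n ℂ) (hV : V ∈ unitaryGroup n ℂ) :
    (inner ℂ (hsVec (matSqrt ρ * U)) (hsVec (matSqrt σ * V))).re ≤ Real.sqrt (fid ρ σ) := by
  have htr : inner ℂ (hsVec (matSqrt ρ * U)) (hsVec (matSqrt σ * V))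
      = (matSqrt ρ * matSqrt σ * (V * star U)).trace := by
    rw [inner_hsVec, conjTranspose_mul, conjTranspose_matSqrt hρ, ← star_eq_conjTranspose,
      Matrix.mul_assoc, trace_mul_comm]
    simp only [Matrix.mul_assoc]
  rw [htr, fid_comm hρ hσ, sqrt_fid_eq_traceNorm hσ hρ]
  exact (Complex.re_le_norm _).trans
    (norm_trace_mul_unitary_le_traceNorm _ (Submonoid.mul_mem _ hV (Unitary.star_mem hU)))

lemma fid_le_one (hρ : IsDensity ρ) (hσ : IsDensity σ) : fid ρ σ ≤ 1 := by
  obtain ⟨U, hU, hinner⟩ := exists_unitary_inner_hsVec_eq_sqrt_fid hρ.1 hσ.1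
  have hle := norm_inner_le_norm (𝕜 := ℂ) (hsVec (matSqrt σ)) (hsVec (matSqrt ρ * U))
  have hσ1 : ‖hsVec (matSqrt σ)‖ = 1 := by simpa using norm_hsVec_matSqrt_mul hσ (one_mem _)
  rw [hinner, Complex.norm_real, Real.norm_of_nonneg (Real.sqrt_nonneg _),
    norm_hsVec_matSqrt_mul hρ hU, hσ1, mul_one] at hle
  exact Real.sqrt_le_one.mp hle

end Fidelity

lemma arccos_re_inner_le_add_of_norm_eq_one {E : Type*} [NormedAddCommGroup E]
    [InnerProductSpace ℂ E] {x y z : E} (hx : ‖x‖ = 1) (hy : ‖y‖ = 1) (hz : ‖z‖ = 1) :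
    Real.arccos (inner ℂ x z).re ≤
      Real.arccos (inner ℂ x y).re + Real.arccos (inner ℂ y z).re := by
  let := InnerProductSpace.rclikeToReal ℂ E
  simpa [InnerProductGeometry.angle, hx, hy, hz, real_inner_eq_re_inner] using
    InnerProductGeometry.angle_le_angle_add_angle x y z

section Bures

variable {n : Type*} [Fintype n] [DecidableEq n] {ρ σ τ : Matrix n n ℂ}

theorem bures_triangle (hρ : IsDensity ρ) (hσ : IsDensity σ) (hτ : IsDensity τ) :
    bures ρ τ ≤ bures ρ σ + bures σ τ := by
  obtain ⟨U, hU, hρσ⟩ := exists_unitary_inner_hsVec_eq_sqrt_fid hρ.1 hσ.1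
  obtain ⟨V, hV, hτσ⟩ := exists_unitary_inner_hsVec_eq_sqrt_fid hτ.1 hσ.1
  have hσ1 : ‖hsVec (matSqrt σ)‖ = 1 := by simpa using norm_hsVec_matSqrt_mul hσ (one_mem _)
  calc bures ρ τ
      ≤ Real.arccos (inner ℂ (hsVec (matSqrt ρ * U)) (hsVec (matSqrt τ * V))).re :=
        Real.arccos_le_arccos (re_inner_hsVec_le_sqrt_fid hρ.1 hτ.1 hU hV)
    _ ≤ Real.arccos (inner ℂ (hsVec (matSqrt ρ * U)) (hsVec (matSqrt σ))).re +
          Real.arccos (inner ℂ (hsVec (matSqrt σ)) (hsVec (matSqrt τ * V))).re :=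
        arccos_re_inner_le_add_of_norm_eq_one (norm_hsVec_matSqrt_mul hρ hU) hσ1
          (norm_hsVec_matSqrt_mul hτ hV)
    _ = bures ρ σ + bures σ τ := by
        rw [← inner_conj_symm (hsVec (matSqrt ρ * U)), hρσ, hτσ, Complex.conj_ofReal,
          Complex.ofReal_re, Complex.ofReal_re, fid_comm hτ.1 hσ.1]
        rfl

lemma bures_nonneg (ρ σ : Matrix n n ℂ) : 0 ≤ bures ρ σ := Real.arccos_nonneg _

lemma bures_le_of_cos_sq_le_fid {θ : ℝ} (hθ₀ : 0 ≤ θ) (hθπ : θ ≤ Real.pi)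
    (h : Real.cos θ ^ 2 ≤ fid ρ σ) : bures ρ σ ≤ θ := by
  calc bures ρ σ ≤ Real.arccos (Real.cos θ) :=
        Real.arccos_le_arccos ((le_abs_self _).trans (Real.abs_le_sqrt h))
    _ = θ := Real.arccos_cos hθ₀ hθπ

lemma le_bures_of_fid_le_cos_sq {θ : ℝ} (hθ₀ : 0 ≤ θ) (hθπ : θ ≤ Real.pi / 2)
    (h : fid ρ σ ≤ Real.cos θ ^ 2) : θ ≤ bures ρ σ := by
  have hcos : 0 ≤ Real.cos θ := Real.cos_nonneg_of_mem_Icc ⟨by linarith [Real.pi_pos], hθπ⟩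
  calc θ = Real.arccos (Real.cos θ) := (Real.arccos_cos hθ₀ (by linarith [Real.pi_pos])).symm
    _ ≤ bures ρ σ := Real.arccos_le_arccos ((Real.sqrt_le_sqrt h).trans_eq (Real.sqrt_sq hcos))

lemma fid_le_cos_sq_of_le_bures (hρ : IsDensity ρ) (hσ : IsDensity σ) {θ : ℝ} (hθ₀ : 0 ≤ θ)
    (h : θ ≤ bures ρ σ) : fid ρ σ ≤ Real.cos θ ^ 2 := by
  have hcos : Real.cos (bures ρ σ) = Real.sqrt (fid ρ σ) :=
    Real.cos_arccos (by linarith [Real.sqrt_nonneg (fid ρ σ)])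
      (Real.sqrt_le_one.mpr (fid_le_one hρ hσ))
  have hle : Real.cos (bures ρ σ) ≤ Real.cos θ :=
    Real.cos_le_cos_of_nonneg_of_le_pi hθ₀ (Real.arccos_le_pi _) h
  calc fid ρ σ = Real.cos (bures ρ σ) ^ 2 := by
        rw [hcos, Real.sq_sqrt (fid_nonneg ρ σ)]
    _ ≤ Real.cos θ ^ 2 := pow_le_pow_left₀ (hcos ▸ Real.sqrt_nonneg _) hle 2

end Bures

lemma SepState.isDensity {σ : Q2} (h : SepState σ) : IsDensity σ := by
  obtain ⟨m, p, a, b, hp, hsum, ha, hb, rfl⟩ := h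
  refine ⟨posSemidef_sum _ fun i _ => ((ha i).1.kronecker (hb i).1).smul (hp i), ?_⟩
  have hta (i : Fin m) : (a i).trace = 1 := (ha i).2
  have htb (i : Fin m) : (b i).trace = 1 := (hb i).2
  simp only [trace_sum, trace_smul, trace_kronecker, hta, htb, mul_one, Complex.real_smul]
  exact_mod_cast hsum

lemma bddAbove_fid_sepState {ρ : Q2} (hρ : IsDensity ρ) :
    BddAbove {x : ℝ | ∃ σ, SepState σ ∧ x = fid ρ σ} := by
  refine ⟨1, ?_⟩
  rintro _ ⟨σ, hσ, rfl⟩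
  exact fid_le_one hρ hσ.isDensity

open Real in
/-- Lower continuity bound for two-qubit geometric entanglement:
if `G(ρ) = sin²α` and `F(ρ,ρ') ≥ cos²k` then `G(ρ') ≥ sin²(max{α−k,0})`. -/
theorem geometric_lower_continuity (ρ ρ' : Q2) (hρ : IsDensity ρ) (hρ' : IsDensity ρ')
    (α k : ℝ) (hα : α ∈ Set.Icc 0 (π / 4)) (hk : k ∈ Set.Icc 0 (π / 2))
    (hG : G2 ρ = Real.sin α ^ 2) (hf : Real.cos k ^ 2 ≤ fid ρ ρ') :
    Real.sin (max (α - k) 0) ^ 2 ≤ G2 ρ' := by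
  obtain ⟨hα₀, hαπ⟩ := hα
  obtain ⟨hk₀, hkπ⟩ := hk
  have hsup : sSup {x : ℝ | ∃ σ, SepState σ ∧ x = fid ρ σ} = cos α ^ 2 := by
    rw [G2] at hG
    linarith [sin_sq_add_cos_sq α]
  have hρρ' : bures ρ ρ' ≤ k := bures_le_of_cos_sq_le_fid hk₀ (by linarith [pi_pos]) hf
  have hfid : ∀ σ, SepState σ → fid ρ' σ ≤ cos (max (α - k) 0) ^ 2 := by
    intro σ hσ
    have hρσ : α ≤ bures ρ σ := le_bures_of_fid_le_cos_sq hα₀ (by linarith [pi_pos])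
      (hsup ▸ le_csSup (bddAbove_fid_sepState hρ) ⟨σ, hσ, rfl⟩)
    have htri := bures_triangle hρ hρ' hσ.isDensity
    exact fid_le_cos_sq_of_le_bures hρ' hσ.isDensity (le_max_right _ _)
      (max_le (by linarith) (bures_nonneg _ _))
  have hsup_ρ' : sSup {x : ℝ | ∃ σ, SepState σ ∧ x = fid ρ' σ} ≤ cos (max (α - k) 0) ^ 2 :=
    Real.sSup_le (by rintro _ ⟨σ, hσ, rfl⟩; exact hfid σ hσ) (sq_nonneg _)
  rw [G2]
  linarith [sin_sq_add_cos_sq (max (α - k) 0)]
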